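/- arXiv:1709.08234 — 3 statements merged into one kernel-verified Lean document; each statement's English description precedes it below -/
import Mathlib

section
/- Let V₀, V₊ be smooth solutions of the heat equations ∂ₜV₀ = ∂ₓ²V₀ and ∂ₜV₊ = ∂ₓ²V₊ with V₀ everywhere positive. Then u₀ := ∂ₓV₀/V₀ and u₊ := V₀ ∂ₓ(V₊/V₀) satisfy the two-component Burgers system ∂ₜu₀ = ∂ₓ²u₀ + 2u₀∂ₓu₀ and ∂ₜu₊ = ∂ₓ²u₊ + 2u₊∂ₓu₀. -/
open Function

noncomputable def px (f : ℝ → ℝ → ℝ) : ℝ → ℝ → ℝ := fun t x => deriv (f t) x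
noncomputable def pt (f : ℝ → ℝ → ℝ) : ℝ → ℝ → ℝ := fun t x => deriv (fun s => f s x) t

lemma sliceX {f : ℝ → ℝ → ℝ} (hf : ContDiff ℝ (⊤ : ℕ∞) (uncurry f)) (t : ℝ) :
    ContDiff ℝ (⊤ : ℕ∞) (f t) := hf.comp (contDiff_const.prodMk contDiff_id)

lemma sliceT {f : ℝ → ℝ → ℝ} (hf : ContDiff ℝ (⊤ : ℕ∞) (uncurry f)) (x : ℝ) :
    ContDiff ℝ (⊤ : ℕ∞) (fun s => f s x) := hf.comp (contDiff_id.prodMk contDiff_const)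

lemma hasDerivAt_sliceX {f : ℝ → ℝ → ℝ} (hf : ContDiff ℝ (⊤ : ℕ∞) (uncurry f)) (t x : ℝ) :
    HasDerivAt (f t) (px f t x) x :=
  (((sliceX hf t).differentiable (by simp)) x).hasDerivAt

lemma hasDerivAt_sliceT {f : ℝ → ℝ → ℝ} (hf : ContDiff ℝ (⊤ : ℕ∞) (uncurry f)) (t x : ℝ) :
    HasDerivAt (fun s => f s x) (pt f t x) t :=
  (((sliceT hf x).differentiable (by simp)) t).hasDerivAt

lemma px_eq {f : ℝ → ℝ → ℝ} (hf : ContDiff ℝ (⊤ : ℕ∞) (uncurry f)) (t x : ℝ) :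
    px f t x = fderiv ℝ (uncurry f) (t, x) (0, 1) := by
  have h1 : HasFDerivAt (fun x : ℝ => (t, x))
      ((0 : ℝ →L[ℝ] ℝ).prod (ContinuousLinearMap.id ℝ ℝ)) x :=
    (hasFDerivAt_const t x).prodMk (hasFDerivAt_id x)
  have h2 := ((hf.differentiable (by simp)) (t, x)).hasFDerivAt
  have h3 := (h2.comp x h1).hasDerivAt
  have h4 := h3.deriv; simp at h4; exact h4

lemma pt_eq {f : ℝ → ℝ → ℝ} (hf : ContDiff ℝ (⊤ : ℕ∞) (uncurry f)) (t x : ℝ) :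
    pt f t x = fderiv ℝ (uncurry f) (t, x) (1, 0) := by
  have h1 : HasFDerivAt (fun s : ℝ => (s, x))
      ((ContinuousLinearMap.id ℝ ℝ).prod (0 : ℝ →L[ℝ] ℝ)) t :=
    (hasFDerivAt_id t).prodMk (hasFDerivAt_const x t)
  have h2 := ((hf.differentiable (by simp)) (t, x)).hasFDerivAt
  have h3 := (h2.comp t h1).hasDerivAt
  have h4 := h3.deriv; simp at h4; exact h4

lemma contDiff_px {f : ℝ → ℝ → ℝ} (hf : ContDiff ℝ (⊤ : ℕ∞) (uncurry f)) :
    ContDiff ℝ (⊤ : ℕ∞) (uncurry (px f)) := by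
  have h : uncurry (px f) = fun p : ℝ × ℝ => fderiv ℝ (uncurry f) p (0, 1) :=
    funext fun p => px_eq hf p.1 p.2
  rw [h]
  exact (hf.fderiv_right (by simp)).clm_apply contDiff_const

lemma fderiv_clm_apply_const {F : ℝ × ℝ → ℝ} (hf : ContDiff ℝ (⊤ : ℕ∞) F) (q : ℝ × ℝ) (c v : ℝ × ℝ) :
    fderiv ℝ (fun p => fderiv ℝ F p c) q v = fderiv ℝ (fderiv ℝ F) q v c := by
  have hD : HasFDerivAt (fderiv ℝ F) (fderiv ℝ (fderiv ℝ F) q) q :=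
    (((hf.fderiv_right (m := (⊤ : ℕ∞)) (by simp)).differentiable (by simp)) q).hasFDerivAt
  have h := ((ContinuousLinearMap.apply ℝ ℝ c).hasFDerivAt).comp q hD
  have h' : HasFDerivAt (fun p => fderiv ℝ F p c)
      (((ContinuousLinearMap.apply ℝ ℝ) c).comp (fderiv ℝ (fderiv ℝ F) q)) q := h
  rw [h'.fderiv]
  rfl

lemma pt_px_comm {f : ℝ → ℝ → ℝ} (hf : ContDiff ℝ (⊤ : ℕ∞) (uncurry f)) (t x : ℝ) :
    pt (px f) t x = px (pt f) t x := by
  have hsym : IsSymmSndFDerivAt ℝ (uncurry f) (t, x) :=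
    (hf.contDiffAt).isSymmSndFDerivAt (by norm_num; exact (WithTop.coe_le_coe.mpr (le_top : (2 : ℕ∞) ≤ ⊤) : ((2 : ℕ∞) : WithTop ℕ∞) ≤ ((⊤ : ℕ∞) : WithTop ℕ∞)))
  have e1 : uncurry (px f) = fun p : ℝ × ℝ => fderiv ℝ (uncurry f) p (0, 1) :=
    funext fun p => px_eq hf p.1 p.2
  have e2 : uncurry (pt f) = fun p : ℝ × ℝ => fderiv ℝ (uncurry f) p (1, 0) :=
    funext fun p => pt_eq hf p.1 p.2
  have h1 : pt (px f) t x = fderiv ℝ (uncurry (px f)) (t, x) (1, 0) :=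
    pt_eq (contDiff_px hf) t x
  have h2 : px (pt f) t x = fderiv ℝ (uncurry (pt f)) (t, x) (0, 1) := by
    have hc : ContDiff ℝ (⊤ : ℕ∞) (uncurry (pt f)) := by
      rw [e2]; exact (hf.fderiv_right (by simp)).clm_apply contDiff_const
    exact px_eq hc t x
  rw [h1, h2, e1, e2, fderiv_clm_apply_const hf, fderiv_clm_apply_const hf]
  exact hsym _ _

theorem cole_hopf_heat_to_burgers (V0 Vp u0 up : ℝ → ℝ → ℝ)
    (hV0 : ContDiff ℝ (⊤ : ℕ∞) (Function.uncurry V0))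
    (hVp : ContDiff ℝ (⊤ : ℕ∞) (Function.uncurry Vp))
    (hpos : ∀ t x, 0 < V0 t x)
    (heat0 : ∀ t x, deriv (fun s => V0 s x) t = deriv (deriv (V0 t)) x)
    (heatp : ∀ t x, deriv (fun s => Vp s x) t = deriv (deriv (Vp t)) x)
    (hu0 : ∀ t x, u0 t x = deriv (V0 t) x / V0 t x)
    (hup : ∀ t x, up t x = V0 t x * deriv (fun y => Vp t y / V0 t y) x) :
    (∀ t x, deriv (fun s => u0 s x) t
        = deriv (deriv (u0 t)) x + 2 * u0 t x * deriv (u0 t) x) ∧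
    (∀ t x, deriv (fun s => up s x) t
        = deriv (deriv (up t)) x + 2 * up t x * deriv (u0 t) x) := by
  have hne : ∀ t x, V0 t x ≠ 0 := fun t x => (hpos t x).ne'
  set W : ℝ → ℝ → ℝ := fun s y => Vp s y / V0 s y with hWdef
  have hW : ContDiff ℝ (⊤ : ℕ∞) (uncurry W) := hVp.div hV0 (fun p => hne p.1 p.2)
  have hA1 : ContDiff ℝ (⊤ : ℕ∞) (uncurry (px V0)) := contDiff_px hV0
  have hA2 : ContDiff ℝ (⊤ : ℕ∞) (uncurry (px (px V0))) := contDiff_px hA1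
  have hB1 : ContDiff ℝ (⊤ : ℕ∞) (uncurry (px Vp)) := contDiff_px hVp
  have hB2 : ContDiff ℝ (⊤ : ℕ∞) (uncurry (px (px Vp))) := contDiff_px hB1
  have hC : ContDiff ℝ (⊤ : ℕ∞) (uncurry (px W)) := contDiff_px hW
  have hC1 : ContDiff ℝ (⊤ : ℕ∞) (uncurry (px (px W))) := contDiff_px hC
  have dA : ∀ t y, HasDerivAt (V0 t) (px V0 t y) y := hasDerivAt_sliceX hV0
  have dA1 : ∀ t y, HasDerivAt (px V0 t) (px (px V0) t y) y := hasDerivAt_sliceX hA1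
  have dA2 : ∀ t y, HasDerivAt (px (px V0) t) (px (px (px V0)) t y) y := hasDerivAt_sliceX hA2
  have dB : ∀ t y, HasDerivAt (Vp t) (px Vp t y) y := hasDerivAt_sliceX hVp
  have dB1 : ∀ t y, HasDerivAt (px Vp t) (px (px Vp) t y) y := hasDerivAt_sliceX hB1
  have dB2 : ∀ t y, HasDerivAt (px (px Vp) t) (px (px (px Vp)) t y) y := hasDerivAt_sliceX hB2
  have dC : ∀ t y, HasDerivAt (px W t) (px (px W) t y) y := hasDerivAt_sliceX hC
  have dC1 : ∀ t y, HasDerivAt (px (px W) t) (px (px (px W)) t y) y := hasDerivAt_sliceX hC1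
  have heat0' : ∀ t x, pt V0 t x = px (px V0) t x := heat0
  have heatp' : ∀ t x, pt Vp t x = px (px Vp) t x := heatp
  have clA : ∀ t x, pt (px V0) t x = px (px (px V0)) t x := by
    intro t x
    rw [pt_px_comm hV0 t x]
    show deriv (pt V0 t) x = deriv (px (px V0) t) x
    congr 1
    exact funext fun y => heat0' t y
  have hu0' : ∀ t x, u0 t x = px V0 t x / V0 t x := hu0
  have hu0f : ∀ t, u0 t = fun y => px V0 t y / V0 t y := fun t => funext (hu0' t)
  have du0 : ∀ t y, deriv (u0 t) y
      = (px (px V0) t y * V0 t y - px V0 t y * px V0 t y) / V0 t y ^ 2 := by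
    intro t y
    rw [hu0f t]
    exact ((dA1 t y).div (dA t y) (hne t y)).deriv
  have du0f : ∀ t, deriv (u0 t) = fun y =>
      (px (px V0) t y * V0 t y - px V0 t y * px V0 t y) / V0 t y ^ 2 :=
    fun t => funext (du0 t)
  constructor
  · intro t x
    have dd0 := ((((dA2 t x).fun_mul (dA t x)).fun_sub ((dA1 t x).fun_mul (dA1 t x))).fun_div
      ((dA t x).fun_pow 2) (pow_ne_zero 2 (hne t x))).deriv
    have hL : (fun s => u0 s x) = fun s => px V0 s x / V0 s x := funext fun s => hu0' s x
    rw [hL, ((hasDerivAt_sliceT hA1 t x).fun_div (hasDerivAt_sliceT hV0 t x) (hne t x)).deriv,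
      clA t x, heat0' t x, hu0' t x, du0 t x, du0f t, dd0]
    have ha := hne t x
    norm_num
    field_simp
    ring
  · intro t x
    have hup' : ∀ t x, up t x = V0 t x * px W t x := hup
    have hupf : ∀ t, up t = fun y => V0 t y * px W t y := fun t => funext (hup' t)
    have ptW : ∀ s y, pt W s y
        = (px (px Vp) s y * V0 s y - Vp s y * px (px V0) s y) / V0 s y ^ 2 := by
      intro s y
      have h := ((hasDerivAt_sliceT hVp s y).div (hasDerivAt_sliceT hV0 s y) (hne s y)).deriv
      rw [heat0', heatp'] at h
      exact h
    have ptWf : pt W t = fun y =>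
        (px (px Vp) t y * V0 t y - Vp t y * px (px V0) t y) / V0 t y ^ 2 := funext (ptW t)
    have ptWx := ((((dB2 t x).fun_mul (dA t x)).fun_sub ((dB t x).fun_mul (dA2 t x))).fun_div
      ((dA t x).fun_pow 2) (pow_ne_zero 2 (hne t x))).deriv
    have eptW : px (pt W) t x
        = deriv (fun y => (px (px Vp) t y * V0 t y - Vp t y * px (px V0) t y) / V0 t y ^ 2) x := by
      show deriv (pt W t) x = _
      rw [ptWf]
    have cW : ∀ t y, px W t y = (px Vp t y * V0 t y - Vp t y * px V0 t y) / V0 t y ^ 2 :=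
      fun t y => ((dB t y).div (dA t y) (hne t y)).deriv
    have cWf : ∀ t, px W t = fun y => (px Vp t y * V0 t y - Vp t y * px V0 t y) / V0 t y ^ 2 :=
      fun t => funext (cW t)
    have c1W : ∀ t y, px (px W) t y
        = ((px (px Vp) t y * V0 t y - Vp t y * px (px V0) t y) * V0 t y
            - 2 * ((px Vp t y * V0 t y - Vp t y * px V0 t y) * px V0 t y)) / V0 t y ^ 3 := by
      intro t y
      show deriv (px W t) y = _
      rw [cWf t, ((((dB1 t y).fun_mul (dA t y)).fun_sub ((dB t y).fun_mul (dA1 t y))).fun_div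
        ((dA t y).fun_pow 2) (pow_ne_zero 2 (hne t y))).deriv]
      have := hne t y
      field_simp
      ring
    have c1Wf : px (px W) t = fun y =>
        ((px (px Vp) t y * V0 t y - Vp t y * px (px V0) t y) * V0 t y
          - 2 * ((px Vp t y * V0 t y - Vp t y * px V0 t y) * px V0 t y)) / V0 t y ^ 3 :=
      funext (c1W t)
    have hnum := ((((dB2 t x).fun_mul (dA t x)).fun_sub ((dB t x).fun_mul (dA2 t x))).fun_mul (dA t x)).fun_sub
      (((((dB1 t x).fun_mul (dA t x)).fun_sub ((dB t x).fun_mul (dA1 t x))).fun_mul (dA1 t x)).const_mul (2 : ℝ))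
    have c2comb := (hnum.fun_div ((dA t x).fun_pow 3) (pow_ne_zero 3 (hne t x))).deriv
    have ec2 : px (px (px W)) t x
        = deriv (fun y =>
            ((px (px Vp) t y * V0 t y - Vp t y * px (px V0) t y) * V0 t y
              - 2 * ((px Vp t y * V0 t y - Vp t y * px V0 t y) * px V0 t y)) / V0 t y ^ 3) x := by
      show deriv (px (px W) t) x = _
      rw [c1Wf]
    have dupf : deriv (fun y => V0 t y * px W t y)
        = fun y => px V0 t y * px W t y + V0 t y * px (px W) t y :=
      funext fun y => ((dA t y).mul (dC t y)).deriv
    have ddup := (((dA1 t x).fun_mul (dC t x)).fun_add ((dA t x).fun_mul (dC1 t x))).deriv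
    have hL : (fun s => up s x) = fun s => V0 s x * px W s x := funext fun s => hup' s x
    rw [hL, ((hasDerivAt_sliceT hV0 t x).fun_mul (hasDerivAt_sliceT hC t x)).deriv,
      heat0' t x, pt_px_comm hW t x, eptW, ptWx,
      hup' t x, du0 t x, hupf t, dupf, ddup, ec2, c2comb, c1W t x, cW t x]
    have ha := hne t x
    norm_num
    field_simp
    ring
end

section
/- Let v₀, v₊ be smooth functions with V₀ = e^{v₀}, V₊ = e^{v₀}v₊. Then V₀ and V₊ solve the linear Airy equations ∂ₜV₀ = ∂ₓ³V₀, ∂ₜV₊ = ∂ₓ³V₊ if and only if v₀, v₊ solve the potential system ∂ₜv₀ = ∂ₓ³v₀ + 3∂ₓv₀∂ₓ²v₀ + (∂ₓv₀)³ and ∂ₜv₊ = ∂ₓ³v₊ + 3∂ₓv₀∂ₓ²v₊ + 3∂ₓv₊(∂ₓ²v₀ + (∂ₓv₀)²). -/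
open scoped ContDiff

private lemma sm_deriv {f : ℝ → ℝ} (hf : ContDiff ℝ ∞ f) : ContDiff ℝ ∞ (deriv f) :=
  (contDiff_infty_iff_deriv.mp hf).2

private lemma key_step {g h : ℝ → ℝ} (hg : ContDiff ℝ ∞ g) (hh : ContDiff ℝ ∞ h) :
    deriv (fun y => Real.exp (g y) * h y)
      = fun y => Real.exp (g y) * (deriv g y * h y + deriv h y) := by
  funext y
  have h1 : HasDerivAt (fun y => Real.exp (g y)) (Real.exp (g y) * deriv g y) y :=
    ((hg.differentiable (by norm_num) y).hasDerivAt).exp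
  have h2 : HasDerivAt h (deriv h y) y := (hh.differentiable (by norm_num) y).hasDerivAt
  exact (h1.mul h2).deriv.trans (by ring)

private lemma D3_exp_mul {g h : ℝ → ℝ} (hg : ContDiff ℝ ∞ g) (hh : ContDiff ℝ ∞ h) (x : ℝ) :
    deriv (deriv (deriv (fun y => Real.exp (g y) * h y))) x
      = Real.exp (g x) * (deriv (deriv (deriv h)) x
          + 3 * deriv g x * deriv (deriv h) x
          + 3 * deriv h x * (deriv (deriv g) x + (deriv g x) ^ 2)
          + h x * (deriv (deriv (deriv g)) x
              + 3 * deriv g x * deriv (deriv g) x + (deriv g x) ^ 3)) := by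
  have hg1 := sm_deriv hg
  have hg2 := sm_deriv hg1
  have hh1 := sm_deriv hh
  have hh2 := sm_deriv hh1
  have e2 : deriv (deriv (fun y => Real.exp (g y) * h y))
      = fun y => Real.exp (g y) * (deriv g y * (deriv g y * h y + deriv h y)
          + (deriv (deriv g) y * h y + deriv g y * deriv h y + deriv (deriv h) y)) := by
    rw [key_step hg hh]
    funext y
    have Hexp : HasDerivAt (fun z => Real.exp (g z)) (Real.exp (g y) * deriv g y) y :=
      ((hg.differentiable (by norm_num) y).hasDerivAt).exp
    have Hg1 : HasDerivAt (deriv g) (deriv (deriv g) y) y :=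
      (hg1.differentiable (by norm_num) y).hasDerivAt
    have Hh : HasDerivAt h (deriv h y) y := (hh.differentiable (by norm_num) y).hasDerivAt
    have Hh1 : HasDerivAt (deriv h) (deriv (deriv h) y) y :=
      (hh1.differentiable (by norm_num) y).hasDerivAt
    have H : HasDerivAt (fun y => Real.exp (g y) * (deriv g y * h y + deriv h y))
        (Real.exp (g y) * deriv g y * (deriv g y * h y + deriv h y)
          + Real.exp (g y) * (deriv (deriv g) y * h y + deriv g y * deriv h y
              + deriv (deriv h) y)) y := by
      exact Hexp.mul ((Hg1.mul Hh).add Hh1)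
    rw [H.deriv]; ring
  rw [e2]
  have Hexp : HasDerivAt (fun z => Real.exp (g z)) (Real.exp (g x) * deriv g x) x :=
    ((hg.differentiable (by norm_num) x).hasDerivAt).exp
  have Hg1 : HasDerivAt (deriv g) (deriv (deriv g) x) x :=
    (hg1.differentiable (by norm_num) x).hasDerivAt
  have Hg2 : HasDerivAt (deriv (deriv g)) (deriv (deriv (deriv g)) x) x :=
    (hg2.differentiable (by norm_num) x).hasDerivAt
  have Hh : HasDerivAt h (deriv h x) x := (hh.differentiable (by norm_num) x).hasDerivAt
  have Hh1 : HasDerivAt (deriv h) (deriv (deriv h) x) x :=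
    (hh1.differentiable (by norm_num) x).hasDerivAt
  have Hh2 : HasDerivAt (deriv (deriv h)) (deriv (deriv (deriv h)) x) x :=
    (hh2.differentiable (by norm_num) x).hasDerivAt
  have H : HasDerivAt (fun y => Real.exp (g y) * (deriv g y * (deriv g y * h y + deriv h y)
          + (deriv (deriv g) y * h y + deriv g y * deriv h y + deriv (deriv h) y)))
      (Real.exp (g x) * deriv g x * (deriv g x * (deriv g x * h x + deriv h x)
          + (deriv (deriv g) x * h x + deriv g x * deriv h x + deriv (deriv h) x))
        + Real.exp (g x) * ((deriv (deriv g) x * (deriv g x * h x + deriv h x)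
              + deriv g x * (deriv (deriv g) x * h x + deriv g x * deriv h x
                  + deriv (deriv h) x))
            + ((deriv (deriv (deriv g)) x * h x + deriv (deriv g) x * deriv h x)
                + (deriv (deriv g) x * deriv h x + deriv g x * deriv (deriv h) x)
                + deriv (deriv (deriv h)) x))) x := by
    exact Hexp.mul ((Hg1.mul ((Hg1.mul Hh).add Hh1)).add
      (((Hg2.mul Hh).add (Hg1.mul Hh1)).add Hh2))
  rw [H.deriv]; ring

private lemma D3_exp {g : ℝ → ℝ} (hg : ContDiff ℝ ∞ g) (x : ℝ) :
    deriv (deriv (deriv (fun y => Real.exp (g y)))) x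
      = Real.exp (g x) * (deriv (deriv (deriv g)) x
          + 3 * deriv g x * deriv (deriv g) x + (deriv g x) ^ 3) := by
  have key := D3_exp_mul hg (contDiff_const (c := (1 : ℝ))) x
  simp only [deriv_const', mul_one] at key
  simpa using key

theorem cole_hopf_airy_iff_potential_airy (v0 vp : ℝ → ℝ → ℝ)
    (hv0 : ContDiff ℝ (⊤ : ℕ∞) (Function.uncurry v0))
    (hvp : ContDiff ℝ (⊤ : ℕ∞) (Function.uncurry vp)) :
    ((∀ t x, deriv (fun s => Real.exp (v0 s x)) t
        = deriv (deriv (deriv (fun y => Real.exp (v0 t y)))) x) ∧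
     (∀ t x, deriv (fun s => Real.exp (v0 s x) * vp s x) t
        = deriv (deriv (deriv (fun y => Real.exp (v0 t y) * vp t y))) x)) ↔
    ((∀ t x, deriv (fun s => v0 s x) t
        = deriv (deriv (deriv (v0 t))) x
          + 3 * deriv (v0 t) x * deriv (deriv (v0 t)) x + (deriv (v0 t) x) ^ 3) ∧
     (∀ t x, deriv (fun s => vp s x) t
        = deriv (deriv (deriv (vp t))) x
          + 3 * deriv (v0 t) x * deriv (deriv (vp t)) x
          + 3 * deriv (vp t) x * (deriv (deriv (v0 t)) x + (deriv (v0 t) x) ^ 2))) := by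
  have hv0' : ContDiff ℝ ∞ (Function.uncurry v0) := hv0.of_le (by simp)
  have hvp' : ContDiff ℝ ∞ (Function.uncurry vp) := hvp.of_le (by simp)
  have hx0 : ∀ t, ContDiff ℝ ∞ (v0 t) := fun t =>
    hv0'.comp (contDiff_const.prodMk contDiff_id)
  have hxp : ∀ t, ContDiff ℝ ∞ (vp t) := fun t =>
    hvp'.comp (contDiff_const.prodMk contDiff_id)
  have ht0 : ∀ x, ContDiff ℝ ∞ (fun s => v0 s x) := fun x =>
    hv0'.comp (contDiff_id.prodMk contDiff_const)
  have htp : ∀ x, ContDiff ℝ ∞ (fun s => vp s x) := fun x =>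
    hvp'.comp (contDiff_id.prodMk contDiff_const)
  have eq1 : ∀ t x, (deriv (fun s => Real.exp (v0 s x)) t
        = deriv (deriv (deriv (fun y => Real.exp (v0 t y)))) x)
      ↔ (deriv (fun s => v0 s x) t
        = deriv (deriv (deriv (v0 t))) x
          + 3 * deriv (v0 t) x * deriv (deriv (v0 t)) x + (deriv (v0 t) x) ^ 3) := by
    intro t x
    have hT : HasDerivAt (fun s => Real.exp (v0 s x))
        (Real.exp (v0 t x) * deriv (fun s => v0 s x) t) t :=
      (((ht0 x).differentiable (by norm_num) t).hasDerivAt).exp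
    rw [hT.deriv, D3_exp (hx0 t) x]
    exact mul_right_inj' (Real.exp_ne_zero _)
  have eq2 : ∀ t x, (deriv (fun s => v0 s x) t
        = deriv (deriv (deriv (v0 t))) x
          + 3 * deriv (v0 t) x * deriv (deriv (v0 t)) x + (deriv (v0 t) x) ^ 3) →
      ((deriv (fun s => Real.exp (v0 s x) * vp s x) t
        = deriv (deriv (deriv (fun y => Real.exp (v0 t y) * vp t y))) x)
      ↔ (deriv (fun s => vp s x) t
        = deriv (deriv (deriv (vp t))) x
          + 3 * deriv (v0 t) x * deriv (deriv (vp t)) x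
          + 3 * deriv (vp t) x * (deriv (deriv (v0 t)) x + (deriv (v0 t) x) ^ 2))) := by
    intro t x hb1
    have hT0 : HasDerivAt (fun s => Real.exp (v0 s x))
        (Real.exp (v0 t x) * deriv (fun s => v0 s x) t) t :=
      (((ht0 x).differentiable (by norm_num) t).hasDerivAt).exp
    have hTp : HasDerivAt (fun s => vp s x) (deriv (fun s => vp s x) t) t :=
      ((htp x).differentiable (by norm_num) t).hasDerivAt
    have hT : HasDerivAt (fun s => Real.exp (v0 s x) * vp s x)
        (Real.exp (v0 t x) * deriv (fun s => v0 s x) t * vp t x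
          + Real.exp (v0 t x) * deriv (fun s => vp s x) t) t := hT0.mul hTp
    rw [hT.deriv, D3_exp_mul (hx0 t) (hxp t) x, hb1]
    have hE := Real.exp_ne_zero (v0 t x)
    constructor
    · intro H
      have h2 : (deriv (deriv (deriv (v0 t))) x
            + 3 * deriv (v0 t) x * deriv (deriv (v0 t)) x + (deriv (v0 t) x) ^ 3) * vp t x
            + deriv (fun s => vp s x) t
          = (deriv (deriv (deriv (vp t))) x
              + 3 * deriv (v0 t) x * deriv (deriv (vp t)) x
              + 3 * deriv (vp t) x * (deriv (deriv (v0 t)) x + (deriv (v0 t) x) ^ 2))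
            + vp t x * (deriv (deriv (deriv (v0 t))) x
              + 3 * deriv (v0 t) x * deriv (deriv (v0 t)) x + (deriv (v0 t) x) ^ 3) :=
        mul_left_cancel₀ hE (by linear_combination H)
      linarith
    · intro H
      linear_combination Real.exp (v0 t x) * H
  constructor
  · rintro ⟨h1, h2⟩
    have b1 : ∀ t x, deriv (fun s => v0 s x) t
        = deriv (deriv (deriv (v0 t))) x
          + 3 * deriv (v0 t) x * deriv (deriv (v0 t)) x + (deriv (v0 t) x) ^ 3 :=
      fun t x => (eq1 t x).mp (h1 t x)
    exact ⟨b1, fun t x => (eq2 t x (b1 t x)).mp (h2 t x)⟩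
  · rintro ⟨b1, b2⟩
    exact ⟨fun t x => (eq1 t x).mpr (b1 t x),
      fun t x => (eq2 t x (b1 t x)).mpr (b2 t x)⟩
end

section
/- Let u₀ be a smooth function of x with antiderivative v₀ (v₀' = u₀), and let κ be a smooth positive function, v₊ a smooth function with v₊' = e^{−v₀}κ. Then for any constant ε with 1 + ε v₊ nowhere zero, the function ũ₀ := u₀ + 2ε v₊'/(1 + ε v₊) satisfies the same Riccati-type equation as u₀: if (u₀/κ)' + u₀²/(2κ) + τ = 0 then (ũ₀/κ)' + ũ₀²/(2κ) + τ = 0. -/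
theorem riccati_residual_gauge (u0 κ τ v0 vp : ℝ → ℝ) (ε : ℝ)
    (hu0 : ContDiff ℝ (⊤ : ℕ∞) u0) (hκ : ContDiff ℝ (⊤ : ℕ∞) κ) (hτ : ContDiff ℝ (⊤ : ℕ∞) τ)
    (hv0 : ContDiff ℝ (⊤ : ℕ∞) v0) (hvp : ContDiff ℝ (⊤ : ℕ∞) vp)
    (hκpos : ∀ x, 0 < κ x)
    (hv0' : ∀ x, deriv v0 x = u0 x)
    (hvp' : ∀ x, deriv vp x = Real.exp (-v0 x) * κ x)
    (hne : ∀ x, 1 + ε * vp x ≠ 0)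
    (hriccati : ∀ x, deriv (fun y => u0 y / κ y) x + (u0 x) ^ 2 / (2 * κ x) + τ x = 0) :
    ∀ x, deriv (fun y => (u0 y + 2 * ε * deriv vp y / (1 + ε * vp y)) / κ y) x
      + (u0 x + 2 * ε * deriv vp x / (1 + ε * vp x)) ^ 2 / (2 * κ x) + τ x = 0 := by
  intro x
  have hKx : κ x ≠ 0 := (hκpos x).ne'
  have hDx : 1 + ε * vp x ≠ 0 := hne x
  -- rewrite the function using hvp'
  have key : (fun y => (u0 y + 2 * ε * deriv vp y / (1 + ε * vp y)) / κ y)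
      = fun y => u0 y / κ y + 2 * ε * (Real.exp (-v0 y) / (1 + ε * vp y)) := by
    funext y
    have hKy : κ y ≠ 0 := (hκpos y).ne'
    have hDy : 1 + ε * vp y ≠ 0 := hne y
    rw [hvp' y]
    field_simp
  -- derivative of exp(-v0 y)
  have hv0d : HasDerivAt v0 (u0 x) x := by
    have h := (hv0.differentiable (by simp) x).hasDerivAt
    rwa [hv0' x] at h
  have h1 : HasDerivAt (fun y => Real.exp (-v0 y)) (Real.exp (-v0 x) * (-u0 x)) x :=
    hv0d.neg.exp
  have hvpd : HasDerivAt vp (Real.exp (-v0 x) * κ x) x := by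
    have h := (hvp.differentiable (by simp) x).hasDerivAt
    rwa [hvp' x] at h
  have h2 : HasDerivAt (fun y => 1 + ε * vp y) (ε * (Real.exp (-v0 x) * κ x)) x :=
    (hvpd.const_mul ε).const_add 1
  have h3 := h1.div h2 hDx
  have h4 : DifferentiableAt ℝ (fun y => u0 y / κ y) x :=
    (hu0.differentiable (by simp) x).div (hκ.differentiable (by simp) x) hKx
  have h5 : HasDerivAt (fun y => u0 y / κ y + 2 * ε * (Real.exp (-v0 y) / (1 + ε * vp y))) _ x :=
    h4.hasDerivAt.add (h3.const_mul (2 * ε))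
  rw [key, h5.deriv, hvp' x]
  have hr := hriccati x
  have hd : deriv (fun y => u0 y / κ y) x = -((u0 x) ^ 2 / (2 * κ x) + τ x) := by
    linarith
  rw [hd]
  field_simp
  ring
end
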